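/- arXiv:1210.5699 — 4 statements merged into one kernel-verified Lean document; each statement's English description precedes it below -/
import Mathlib

section
/- Let n ≥ 3 and 1 ≤ k ≤ n-1 be integers. If κ = (κ_1,…,κ_{n-1}) ∈ ℝ^{n-1} belongs to the Gårding cone Γ_k^+, then for each index i with 1 ≤ i ≤ n-1 one has σ_{k-1;i}(κ) > 0. -/
/-- The `j`-th elementary symmetric polynomial of `κ = (κ_1, …, κ_m) ∈ ℝ^m`,
with the conventions `σ_0 = 1` and `σ_j = 0` for `j > m`. -/
noncomputable def esymm (m j : ℕ) (κ : Fin m → ℝ) : ℝ :=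
  ∑ s ∈ Finset.powersetCard j (Finset.univ : Finset (Fin m)), ∏ i ∈ s, κ i

/-- `σ_{k;i}(κ)`: the `k`-th elementary symmetric polynomial of the `m - 1` numbers
`κ_1, …, κ_{i-1}, κ_{i+1}, …, κ_m`. -/
noncomputable def esymmWithout (m k : ℕ) (i : Fin m) (κ : Fin m → ℝ) : ℝ :=
  ∑ s ∈ Finset.powersetCard k ((Finset.univ : Finset (Fin m)).erase i), ∏ j ∈ s, κ j

/-- The Gårding cone `Γ_k^+ = {κ ∈ ℝ^m : σ_j(κ) > 0 for j = 1, …, k}`. -/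
def gardingCone (m k : ℕ) : Set (Fin m → ℝ) :=
  {κ | ∀ j, 1 ≤ j → j ≤ k → 0 < esymm m j κ}

/-!
Removing `κ_i` gives `σ_j(κ) = σ_{j;i}(κ) + κ_i σ_{j-1;i}(κ)`. Induct on `k`: given
`σ_{k-1;i} > 0`, if `σ_{k;i} ≤ 0`, then `σ_k > 0` forces `κ_i σ_{k-1;i} ≥ -σ_{k;i} ≥ 0`, and with
`σ_{k+1} > 0` this gives `σ_{k-1;i} σ_{k+1;i} > σ_{k;i}²`, against Newton's inequality for the
real numbers `κ_j`, `j ≠ i`.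

Newton's inequality is proved for the means `E_j = σ_j / (M choose j)` by induction on `M`:
differentiating `∏ (X - κ_j)` keeps all roots real (Rolle) and preserves `E_0, …, E_{M-1}`, which
reduces it to `j = M - 2`; inverting the `κ_j` reduces that case to `j = 0`, i.e. Cauchy–Schwarz.
-/

theorem Nat.choose_mul_choose_add_two_le_sq (n j : ℕ) :
    n.choose j * n.choose (j + 2) ≤ n.choose (j + 1) ^ 2 := by
  rcases lt_or_ge n (j + 2) with h | h
  · rw [Nat.choose_eq_zero_of_lt h, mul_zero]
    exact Nat.zero_le _
  have h1 := Nat.choose_succ_right_eq n j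
  have h2 := Nat.choose_succ_right_eq n (j + 1)
  refine Nat.le_of_mul_le_mul_right (c := (j + 2) * (n - j)) ?_
    (Nat.mul_pos (by omega) (by omega))
  calc n.choose j * n.choose (j + 2) * ((j + 2) * (n - j))
      = n.choose j * (n - j) * (n.choose (j + 2) * (j + 2)) := by ring
    _ = n.choose (j + 1) ^ 2 * ((j + 1) * (n - (j + 1))) := by rw [← h1, h2]; ring
    _ ≤ n.choose (j + 1) ^ 2 * ((j + 2) * (n - j)) := by gcongr <;> omega

open Polynomial in
theorem Polynomial.card_roots_derivative_eq_natDegree {p : ℝ[X]}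
    (hp : p.roots.card = p.natDegree) : (derivative p).roots.card = (derivative p).natDegree := by
  have := card_roots_le_derivative p
  have := card_roots' (derivative p)
  rw [natDegree_derivative] at this ⊢
  omega

namespace Multiset

section CommSemiring

variable {R : Type*} [CommSemiring R]

theorem esymm_zero (s : Multiset R) : s.esymm 0 = 1 := by
  simp [esymm]

theorem esymm_eq_zero_of_card_lt {s : Multiset R} {k : ℕ} (h : card s < k) : s.esymm k = 0 := by
  simp [esymm, powersetCard_eq_empty k h]

theorem esymm_one (s : Multiset R) : s.esymm 1 = s.sum := by
  simp [esymm, powersetCard_one, map_map]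

theorem esymm_cons_succ (a : R) (s : Multiset R) (k : ℕ) :
    (a ::ₘ s).esymm (k + 1) = s.esymm (k + 1) + a * s.esymm k := by
  simp only [esymm, powersetCard_cons, map_add, sum_add, map_map, Function.comp_def, prod_cons,
    sum_map_mul_left]

theorem esymm_card (s : Multiset R) : s.esymm (card s) = s.prod := by
  induction s using Multiset.induction_on with
  | empty => simp [esymm_zero]
  | cons a t ih =>
    rw [card_cons, esymm_cons_succ, esymm_eq_zero_of_card_lt (Nat.lt_succ_self _), ih, prod_cons,
      zero_add]

theorem two_mul_esymm_two_add_sum_sq (s : Multiset R) :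
    2 * s.esymm 2 + (s.map (· ^ 2)).sum = s.sum ^ 2 := by
  induction s using Multiset.induction_on with
  | empty => simp [esymm_eq_zero_of_card_lt (show card (0 : Multiset R) < 2 by simp)]
  | cons a t ih =>
    rw [esymm_cons_succ a t 1, esymm_one, map_cons, sum_cons, sum_cons, add_sq', ← ih]
    ring

end CommSemiring

theorem sq_sum_le_card_mul_sum_sq {α : Type*} [Semiring α] [LinearOrder α]
    [IsStrictOrderedRing α] [ExistsAddOfLE α] (s : Multiset α) :
    s.sum ^ 2 ≤ card s * (s.map (· ^ 2)).sum := by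
  have := _root_.sq_sum_le_card_mul_sum_sq (s := s.toEnumFinset) (f := Prod.fst)
  rwa [card_toEnumFinset, Finset.sum, Finset.sum, ← Function.comp_def (· ^ 2) Prod.fst, ← map_map,
    map_toEnumFinset_fst] at this

theorem prod_mul_esymm_map_inv {K : Type*} [Field K] {s : Multiset K} (h0 : (0 : K) ∉ s) {l : ℕ}
    (hl : l ≤ card s) : s.prod * (s.map (·⁻¹)).esymm l = s.esymm (card s - l) := by
  induction s using Multiset.induction_on generalizing l with
  | empty =>
    obtain rfl : l = 0 := by simpa using hl
    simp [esymm_zero]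
  | cons a t ih =>
    have ha : a ≠ 0 := fun h => h0 (h ▸ mem_cons_self a t)
    have ht : (0 : K) ∉ t := fun h => h0 (mem_cons_of_mem h)
    rcases l with _ | l
    · rw [Nat.sub_zero, esymm_card, esymm_zero, mul_one]
    rw [card_cons] at hl ⊢
    rw [map_cons, esymm_cons_succ, prod_cons]
    rcases (Nat.lt_succ_iff_lt_or_eq.mp hl) with hlt | rfl
    · rw [show card t + 1 - (l + 1) = card t - (l + 1) + 1 by omega, esymm_cons_succ,
        show card t - (l + 1) + 1 = card t - l by omega, ← ih ht hlt.le, ← ih ht hlt]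
      linear_combination t.prod * (t.map (·⁻¹)).esymm l * mul_inv_cancel₀ ha
    · have h := ih ht le_rfl
      rw [Nat.sub_self, esymm_zero] at h
      rw [esymm_eq_zero_of_card_lt (by simp), Nat.sub_self, esymm_zero]
      linear_combination t.prod * (t.map (·⁻¹)).esymm (card t) * mul_inv_cancel₀ ha + h

/-- `σ_j(s) / (card s choose j)`; division by zero makes it `0` for `j > card s`. -/
noncomputable def esymmMean (s : Multiset ℝ) (j : ℕ) : ℝ :=
  s.esymm j / (card s).choose j

theorem esymmMean_zero (s : Multiset ℝ) : s.esymmMean 0 = 1 := by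
  simp [esymmMean, esymm_zero]

theorem esymm_eq_choose_mul_esymmMean (s : Multiset ℝ) (j : ℕ) :
    s.esymm j = (card s).choose j * s.esymmMean j := by
  rcases lt_or_ge (card s) j with h | h
  · simp [esymmMean, esymm_eq_zero_of_card_lt h]
  · have : ((card s).choose j : ℝ) ≠ 0 := by exact_mod_cast (Nat.choose_pos h).ne'
    rw [esymmMean, mul_div_cancel₀ _ this]

theorem esymmMean_eq_zero_of_card_lt {s : Multiset ℝ} {j : ℕ} (h : card s < j) :
    s.esymmMean j = 0 := by
  simp [esymmMean, esymm_eq_zero_of_card_lt h]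

theorem esymmMean_card_sub {s : Multiset ℝ} (h0 : (0 : ℝ) ∉ s) {l : ℕ} (hl : l ≤ card s) :
    s.esymmMean (card s - l) = s.prod * (s.map (·⁻¹)).esymmMean l := by
  rw [esymmMean, esymmMean, ← prod_mul_esymm_map_inv h0 hl, card_map, Nat.choose_symm hl,
    mul_div_assoc]

theorem esymmMean_two_le_sq (s : Multiset ℝ) : s.esymmMean 2 ≤ s.esymmMean 1 ^ 2 := by
  rcases lt_or_ge (card s) 2 with h | h
  · rw [esymmMean_eq_zero_of_card_lt h]
    positivity
  have hM : (2 : ℝ) ≤ card s := by exact_mod_cast h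
  have hCS := sq_sum_le_card_mul_sum_sq s
  have h2 := two_mul_esymm_two_add_sum_sq s
  rw [esymmMean, esymmMean, Nat.choose_one_right, Nat.cast_choose_two, esymm_one, div_pow,
    div_le_div_iff₀ (by nlinarith) (by positivity)]
  nlinarith [mul_le_mul_of_nonneg_left hCS (by positivity : (0 : ℝ) ≤ card s)]

open Polynomial in
/-- `z` is the multiset of roots of the derivative of `∏ r ∈ s, (X - r)`. -/
theorem exists_esymmMean_eq_of_card_eq_succ {s : Multiset ℝ} {M : ℕ} (hs : card s = M + 1) :
    ∃ z : Multiset ℝ, card z = M ∧ ∀ b ≤ M, z.esymmMean b = s.esymmMean b := by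
  set f : ℝ[X] := (s.map (X - C ·)).prod
  have hf_deg : f.natDegree = M + 1 := by rw [natDegree_multiset_prod_X_sub_C_eq_card, hs]
  have hf_lead : f.leadingCoeff = 1 :=
    monic_multiset_prod_of_monic _ _ fun r _ => monic_X_sub_C r
  have hg_roots : card (derivative f).roots = (derivative f).natDegree :=
    card_roots_derivative_eq_natDegree (by rw [roots_multiset_prod_X_sub_C, hs, hf_deg])
  have hg_deg : (derivative f).natDegree = M := by
    rw [natDegree_derivative, hf_deg, Nat.add_sub_cancel]
  refine ⟨(derivative f).roots, hg_roots.trans hg_deg, fun b hb => ?_⟩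
  set z := (derivative f).roots
  have hvieta : ((M + 1 : ℕ) : ℝ) * z.esymm b = ((M + 1 - b : ℕ) : ℝ) * s.esymm b := by
    have hcoeff := coeff_eq_esymm_roots_of_card hg_roots (k := M - b) (by omega)
    rw [coeff_derivative, prod_X_sub_C_coeff s (by omega), leadingCoeff_derivative, hf_lead,
      hf_deg, hg_deg, hs, show M + 1 - (M - b + 1) = b by omega,
      show M - (M - b) = b by omega] at hcoeff
    have hcast : ((M - b : ℕ) : ℝ) + 1 = ((M + 1 - b : ℕ) : ℝ) := by
      rw [show M + 1 - b = M - b + 1 by omega]; push_cast; ring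
    have hsign : ((-1 : ℝ) ^ b) ^ 2 = 1 := by rw [← pow_mul, mul_comm, pow_mul, neg_one_sq, one_pow]
    push_cast at hcoeff ⊢
    linear_combination -(-1 : ℝ) ^ b * hcoeff + s.esymm b * hcast
      + (s.esymm b * ((M - b : ℕ) + 1) - (M + 1) * z.esymm b) * hsign
  have hchoose : (M.choose b : ℝ) * ((M + 1 : ℕ) : ℝ) =
      ((M + 1).choose b) * ((M + 1 - b : ℕ) : ℝ) := by
    exact_mod_cast Nat.choose_mul_succ_eq M b
  have hC : (M.choose b : ℝ) ≠ 0 := by exact_mod_cast (Nat.choose_pos hb).ne'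
  have hC' : ((M + 1).choose b : ℝ) ≠ 0 := by exact_mod_cast (Nat.choose_pos (by omega)).ne'
  rw [esymmMean, esymmMean, hg_roots, hg_deg, hs, div_eq_div_iff hC hC']
  apply mul_left_cancel₀ (show ((M + 1 : ℕ) : ℝ) ≠ 0 by positivity)
  linear_combination ((M + 1).choose b : ℝ) * hvieta - s.esymm b * hchoose

theorem esymmMean_mul_esymmMean_le_sq_of_card_eq {s : Multiset ℝ} {j : ℕ} (hs : card s = j + 2) :
    s.esymmMean j * s.esymmMean (j + 2) ≤ s.esymmMean (j + 1) ^ 2 := by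
  by_cases h0 : (0 : ℝ) ∈ s
  · have : s.esymmMean (j + 2) = 0 := by
      rw [esymmMean, ← hs, esymm_card, prod_eq_zero h0, zero_div]
    rw [this, mul_zero]
    positivity
  have hj := esymmMean_card_sub h0 (l := 2) (by omega)
  have hj1 := esymmMean_card_sub h0 (l := 1) (by omega)
  have hj2 := esymmMean_card_sub h0 (l := 0) (by omega)
  rw [hs, show j + 2 - 2 = j by omega] at hj
  rw [hs, show j + 2 - 1 = j + 1 by omega] at hj1
  rw [hs, Nat.sub_zero, esymmMean_zero, mul_one] at hj2
  rw [hj, hj1, hj2]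
  have := esymmMean_two_le_sq (s.map (·⁻¹))
  nlinarith [mul_le_mul_of_nonneg_left this (sq_nonneg s.prod)]

theorem esymmMean_mul_esymmMean_le_sq (s : Multiset ℝ) (j : ℕ) :
    s.esymmMean j * s.esymmMean (j + 2) ≤ s.esymmMean (j + 1) ^ 2 := by
  rcases lt_or_ge (card s) (j + 2) with hlt | hge
  · rw [esymmMean_eq_zero_of_card_lt hlt, mul_zero]
    positivity
  obtain ⟨M, hM⟩ : ∃ M, card s = j + 2 + M := ⟨card s - (j + 2), by omega⟩
  induction M generalizing s with
  | zero => exact esymmMean_mul_esymmMean_le_sq_of_card_eq hM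
  | succ M ih =>
    obtain ⟨z, hz, hzs⟩ := exists_esymmMean_eq_of_card_eq_succ (M := j + 2 + M) hM
    rw [← hzs j (by omega), ← hzs (j + 1) (by omega), ← hzs (j + 2) (by omega)]
    exact ih z (by omega) hz

theorem esymm_mul_esymm_le_sq (s : Multiset ℝ) (j : ℕ) :
    s.esymm j * s.esymm (j + 2) ≤ s.esymm (j + 1) ^ 2 := by
  simp only [esymm_eq_choose_mul_esymmMean s]
  set M := card s
  have hchoose : (M.choose j : ℝ) * M.choose (j + 2) ≤ M.choose (j + 1) ^ 2 := by
    exact_mod_cast Nat.choose_mul_choose_add_two_le_sq M j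
  calc _ = (M.choose j * M.choose (j + 2) : ℝ) * (s.esymmMean j * s.esymmMean (j + 2)) := by ring
    _ ≤ (M.choose j * M.choose (j + 2) : ℝ) * s.esymmMean (j + 1) ^ 2 := by
        gcongr
        exact esymmMean_mul_esymmMean_le_sq s j
    _ ≤ M.choose (j + 1) ^ 2 * s.esymmMean (j + 1) ^ 2 := by gcongr
    _ = _ := by ring

end Multiset

theorem esymm_eq_esymm_map (m j : ℕ) (κ : Fin m → ℝ) :
    esymm m j κ = (Finset.univ.val.map κ).esymm j :=
  (Finset.esymm_map_val κ _ j).symm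

theorem esymmWithout_eq_esymm_map (m k : ℕ) (i : Fin m) (κ : Fin m → ℝ) :
    esymmWithout m k i κ = ((Finset.univ.erase i).val.map κ).esymm k :=
  (Finset.esymm_map_val κ _ k).symm

theorem esymmWithout_zero (m : ℕ) (i : Fin m) (κ : Fin m → ℝ) : esymmWithout m 0 i κ = 1 := by
  rw [esymmWithout_eq_esymm_map, Multiset.esymm_zero]

theorem esymm_succ_eq_esymmWithout_add (m j : ℕ) (i : Fin m) (κ : Fin m → ℝ) :
    esymm m (j + 1) κ = esymmWithout m (j + 1) i κ + κ i * esymmWithout m j i κ := by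
  rw [esymm_eq_esymm_map, esymmWithout_eq_esymm_map, esymmWithout_eq_esymm_map, Finset.erase_val,
    ← Multiset.esymm_cons_succ, ← Multiset.map_cons,
    Multiset.cons_erase (Finset.mem_univ i)]

theorem esymmWithout_mul_esymmWithout_le_sq (m j : ℕ) (i : Fin m) (κ : Fin m → ℝ) :
    esymmWithout m j i κ * esymmWithout m (j + 2) i κ ≤ esymmWithout m (j + 1) i κ ^ 2 := by
  simp only [esymmWithout_eq_esymm_map]
  exact Multiset.esymm_mul_esymm_le_sq _ j

theorem gardingCone_antitone (m : ℕ) : Antitone (gardingCone m) :=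
  fun _ _ hkl _ hκ j hj1 hjk => hκ j hj1 (hjk.trans hkl)

theorem pos_of_mul_le_sq {a b d x : ℝ} (ha : 0 < a) (h1 : 0 < b + x * a) (h2 : 0 < d + x * b)
    (hN : a * d ≤ b ^ 2) : 0 < b := by
  by_contra! hb
  nlinarith [mul_nonneg h1.le (neg_nonneg.2 hb), mul_pos h2 ha]

theorem esymmWithout_pos_of_mem_gardingCone {m k : ℕ} {κ : Fin m → ℝ}
    (hκ : κ ∈ gardingCone m (k + 1)) (i : Fin m) : 0 < esymmWithout m k i κ := by
  induction k with
  | zero => simp [esymmWithout_zero]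
  | succ k ih =>
    refine pos_of_mul_le_sq (x := κ i) (ih (gardingCone_antitone m (Nat.le_succ _) hκ)) ?_ ?_
      (esymmWithout_mul_esymmWithout_le_sq m k i κ)
    · rw [← esymm_succ_eq_esymmWithout_add]
      exact hκ (k + 1) (by omega) (by omega)
    · rw [← esymm_succ_eq_esymmWithout_add]
      exact hκ (k + 2) (by omega) le_rfl

theorem stmt_0_general (n k : ℕ)
    (κ : Fin (n - 1) → ℝ) (hκ : κ ∈ gardingCone (n - 1) k) (i : Fin (n - 1)) :
    0 < esymmWithout (n - 1) (k - 1) i κ := by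
  cases k with
  | zero => simp [esymmWithout_zero]
  | succ k => exact esymmWithout_pos_of_mem_gardingCone hκ i

/-- If `κ ∈ Γ_k^+` then `σ_{k-1;i}(κ) > 0` for each index `i`. -/
theorem stmt_0 (n k : ℕ) (hn : 3 ≤ n) (hk1 : 1 ≤ k) (hk2 : k ≤ n - 1)
    (κ : Fin (n - 1) → ℝ) (hκ : κ ∈ gardingCone (n - 1) k) (i : Fin (n - 1)) :
    0 < esymmWithout (n - 1) (k - 1) i κ :=
  stmt_0_general n k κ hκ i
end

section
/- Let n ≥ 3 and 1 ≤ k ≤ n-1 be integers. If κ = (κ_1,…,κ_{n-1}) ∈ ℝ^{n-1} belongs to the Gårding cone Γ_k^+, then for every j with 1 ≤ j ≤ k one has the Maclaurin-type inequality σ_{j-1}(κ) ≥ (j/(n-j)) · (binom(n-1, j))^{1/j} · σ_j(κ)^{(j-1)/j}. -/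
open Polynomial

namespace Polynomial

theorem Splits.derivative_of_real {p : ℝ[X]} (hp : p.Splits) : (derivative p).Splits := by
  rw [splits_iff_card_roots] at hp ⊢
  have := p.card_roots_le_derivative
  have := (derivative p).card_roots'
  have := natDegree_derivative_le p
  by_cases h : p.natDegree = 0
  · simp [derivative_of_natDegree_zero h]
  · omega

theorem Splits.iterate_derivative_of_real {p : ℝ[X]} (hp : p.Splits) (k : ℕ) :
    (derivative^[k] p).Splits := by
  induction k with
  | zero => exact hp
  | succ k ih => rw [Function.iterate_succ_apply']; exact ih.derivative_of_real

theorem Splits.reverse {K : Type*} [Field K] {p : K[X]} (hp : p.Splits) : p.reverse.Splits := by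
  rw [hp.eq_prod_roots]
  induction p.roots using Multiset.induction with
  | empty => exact Splits.of_natDegree_le_one (by simp)
  | cons r s ih =>
    rw [Multiset.map_cons, Multiset.prod_cons, mul_left_comm, reverse_mul_of_domain]
    exact (Splits.of_natDegree_le_one ((X - C r).reverse_natDegree_le.trans (by simp))).mul ih

theorem Splits.discrim_nonneg {K : Type*} [Field K] [LinearOrder K] [IsStrictOrderedRing K]
    {p : K[X]} (hp : p.Splits) (hdeg : p.natDegree ≤ 2) :
    0 ≤ discrim (p.coeff 2) (p.coeff 1) (p.coeff 0) := by
  by_cases h2 : p.coeff 2 = 0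
  · rw [discrim, h2]; nlinarith [sq_nonneg (p.coeff 1)]
  have hdeg2 : p.degree ≠ 0 := by
    rw [degree_eq_natDegree (by rintro rfl; simp at h2),
      le_antisymm hdeg (le_natDegree_of_ne_zero h2)]
    decide
  obtain ⟨x, hx⟩ := hp.exists_eval_eq_zero hdeg2
  rw [eval_eq_sum_range' (n := 3) (by omega)] at hx
  simp only [Finset.sum_range_succ, Finset.sum_range_zero] at hx
  rw [discrim_eq_sq_of_quadratic_eq_zero (x := x) (by linear_combination hx)]
  positivity

theorem coeff_iterate_derivative_mul_factorial {R : Type*} [CommSemiring R] (p : R[X])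
    (k b : ℕ) :
    (derivative^[k] p).coeff b * b.factorial = (b + k).factorial * p.coeff (b + k) := by
  rw [coeff_iterate_derivative, nsmul_eq_mul,
    ← Nat.factorial_mul_descFactorial (Nat.le_add_left k b)]
  push_cast
  rw [Nat.add_sub_cancel]
  ring

end Polynomial

noncomputable def esymmMean (m t : ℕ) (κ : Fin m → ℝ) : ℝ := esymm m t κ / m.choose t

section esymmMean

variable {m : ℕ} (κ : Fin m → ℝ)

theorem esymm_eq_choose_mul_esymmMean {t : ℕ} (ht : t ≤ m) :
    esymm m t κ = m.choose t * esymmMean m t κ := by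
  have := (Nat.choose_pos ht).ne'
  rw [esymmMean]
  field_simp

theorem factorial_mul_esymmMean {t : ℕ} (ht : t ≤ m) :
    (m.factorial : ℝ) * esymmMean m t κ = t.factorial * (m - t).factorial * esymm m t κ := by
  have := (Nat.choose_pos ht).ne'
  rw [esymmMean, ← Nat.choose_mul_factorial_mul_factorial ht]
  push_cast
  field_simp

theorem esymmMean_zero : esymmMean m 0 κ = 1 := by
  simp [esymmMean, esymm]

theorem coeff_prod_X_add_C_eq_esymm {t : ℕ} (ht : t ≤ m) :
    (∏ a, (X + C (κ a))).coeff (m - t) = esymm m t κ := by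
  rw [Finset.prod_X_add_C_coeff _ κ (by simp), esymm, Finset.card_univ, Fintype.card_fin,
    Nat.sub_sub_self ht]

theorem natDegree_prod_X_add_C_le : (∏ a, (X + C (κ a))).natDegree ≤ m :=
  (natDegree_prod_le _ _).trans (by simp)

/-- Newton's inequality. Differentiating the real-rooted `P = ∏ (X + κ_a)` `m - i - 2` times,
reversing, and differentiating `i` more times keeps the roots real and leaves the quadratic
`(m!/2) (E_i + 2 E_{i+1} X + E_{i+2} X²)`, whose discriminant is therefore nonnegative. -/
theorem esymmMean_mul_esymmMean_le_sq {i : ℕ} (hi : i + 2 ≤ m) :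
    esymmMean m i κ * esymmMean m (i + 2) κ ≤ esymmMean m (i + 1) κ ^ 2 := by
  set P := ∏ a, (X + C (κ a))
  have hP : P.Splits :=
    Splits.prod fun a _ => Splits.of_natDegree_le_one (natDegree_X_add_C (κ a)).le
  set D := derivative^[m - i - 2] P
  have hD (b : ℕ) : D.coeff b * b.factorial =
      (b + (m - i - 2)).factorial * P.coeff (b + (m - i - 2)) :=
    coeff_iterate_derivative_mul_factorial P _ b
  have hDdeg : D.natDegree = i + 2 := by
    have hPdeg : P.natDegree ≤ m := natDegree_prod_X_add_C_le κ
    refine le_antisymm ((natDegree_iterate_derivative P _).trans (by omega))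
      (le_natDegree_of_ne_zero fun h => ?_)
    have := hD (i + 2)
    rw [h, show i + 2 + (m - i - 2) = m - 0 by omega,
      coeff_prod_X_add_C_eq_esymm κ (Nat.zero_le _), esymm] at this
    simp only [zero_mul, Finset.powersetCard_zero, Finset.sum_singleton, Finset.prod_empty,
      mul_one] at this
    exact Nat.factorial_ne_zero m (by exact_mod_cast this.symm)
  set Q := derivative^[i] D.reverse
  have hQdeg : Q.natDegree ≤ 2 :=
    (natDegree_iterate_derivative _ _).trans (by have := D.reverse_natDegree_le; omega)
  have hQ (t : ℕ) (ht : t ≤ 2) : Q.coeff t * t.factorial * (2 - t).factorial =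
      m.factorial * esymmMean m (i + t) κ := by
    rw [coeff_iterate_derivative_mul_factorial, coeff_reverse, hDdeg, revAt_le (by omega),
      show i + 2 - (t + i) = 2 - t by omega, mul_assoc, hD,
      show 2 - t + (m - i - 2) = m - (i + t) by omega,
      coeff_prod_X_add_C_eq_esymm κ (by omega), factorial_mul_esymmMean κ (by omega),
      add_comm t i]
    ring
  have h0 : Q.coeff 0 = m.factorial * esymmMean m i κ / 2 := by
    have := hQ 0 (by omega); norm_num [Nat.factorial] at this; linarith
  have h1 : Q.coeff 1 = m.factorial * esymmMean m (i + 1) κ := by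
    simpa using hQ 1 (by omega)
  have h2 : Q.coeff 2 = m.factorial * esymmMean m (i + 2) κ / 2 := by
    have := hQ 2 (by omega); norm_num [Nat.factorial] at this; linarith
  have hdisc : 0 ≤ discrim (Q.coeff 2) (Q.coeff 1) (Q.coeff 0) :=
    (((hP.iterate_derivative_of_real _).reverse).iterate_derivative_of_real i).discrim_nonneg
      hQdeg
  rw [discrim, h0, h1, h2] at hdisc
  have hm : (0 : ℝ) < m.factorial ^ 2 := by positivity
  refine sub_nonneg.mp ((mul_nonneg_iff_of_pos_left hm).mp ?_)
  linear_combination hdisc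

variable {κ}

theorem esymmMean_pos_of_mem_gardingCone {k t : ℕ} (hκ : κ ∈ gardingCone m k) (hkm : k ≤ m)
    (ht : t ≤ k) : 0 < esymmMean m t κ := by
  rcases Nat.eq_zero_or_pos t with rfl | ht0
  · simp [esymmMean_zero]
  · exact div_pos (hκ t ht0 ht) (by exact_mod_cast Nat.choose_pos (ht.trans hkm))

end esymmMean

theorem mul_pow_le_pow_succ_of_logConcave {a : ℕ → ℝ} {k : ℕ} (hpos : ∀ t ≤ k, 0 < a t)
    (hlc : ∀ i, i + 2 ≤ k → a i * a (i + 2) ≤ a (i + 1) ^ 2) :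
    ∀ j, j + 1 ≤ k → a 0 * a (j + 1) ^ j ≤ a j ^ (j + 1)
  | 0, _ => by simp
  | j + 1, hj => by
    have ih := mul_pow_le_pow_succ_of_logConcave hpos hlc j (by omega)
    have h₀ := hpos 0 (by omega)
    have hj₀ := hpos j (by omega)
    have hj₁ := hpos (j + 1) (by omega)
    have hj₂ := hpos (j + 2) (by omega)
    refine le_of_mul_le_mul_right ?_ (pow_pos hj₀ (j + 1))
    calc a 0 * a (j + 2) ^ (j + 1) * a j ^ (j + 1) = a 0 * (a j * a (j + 2)) ^ (j + 1) := by ring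
      _ ≤ a 0 * (a (j + 1) ^ 2) ^ (j + 1) := by gcongr; exact hlc j (by omega)
      _ = a (j + 1) ^ (j + 2) * (a 0 * a (j + 1) ^ j) := by ring
      _ ≤ a (j + 1) ^ (j + 2) * a j ^ (j + 1) := by gcongr

theorem esymmMean_pow_le_pow_of_mem_gardingCone {m k j : ℕ} {κ : Fin m → ℝ}
    (hκ : κ ∈ gardingCone m k) (hkm : k ≤ m) (hj : j + 1 ≤ k) :
    esymmMean m (j + 1) κ ^ j ≤ esymmMean m j κ ^ (j + 1) := by
  simpa [esymmMean_zero] using mul_pow_le_pow_succ_of_logConcave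
    (fun t ht => esymmMean_pos_of_mem_gardingCone hκ hkm ht)
    (fun i hi => esymmMean_mul_esymmMean_le_sq κ (hi.trans hkm)) j hj

theorem Real.rpow_div_add_one_le_of_pow_le_pow_succ {x y : ℝ} (hx : 0 ≤ x) (hy : 0 ≤ y)
    {p : ℕ} (h : x ^ p ≤ y ^ (p + 1)) : x ^ ((p : ℝ) / (p + 1)) ≤ y := by
  have hp : ((p + 1 : ℕ) : ℝ) = p + 1 := by push_cast; ring
  calc x ^ ((p : ℝ) / (p + 1)) = (x ^ p) ^ (((p + 1 : ℕ) : ℝ)⁻¹) := by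
        rw [hp, div_eq_mul_inv, Real.rpow_mul hx, Real.rpow_natCast]
    _ ≤ (y ^ (p + 1)) ^ (((p + 1 : ℕ) : ℝ)⁻¹) := by gcongr
    _ = y := Real.pow_rpow_inv_natCast hy p.succ_ne_zero

theorem choose_mul_esymmMean_rpow_le_esymm {m k i : ℕ} {κ : Fin m → ℝ}
    (hκ : κ ∈ gardingCone m k) (hkm : k ≤ m) (hi : i + 1 ≤ k) :
    m.choose i * esymmMean m (i + 1) κ ^ ((i : ℝ) / (i + 1)) ≤ esymm m i κ := by
  rw [esymm_eq_choose_mul_esymmMean κ (by omega)]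
  gcongr
  exact Real.rpow_div_add_one_le_of_pow_le_pow_succ
    (esymmMean_pos_of_mem_gardingCone hκ hkm hi).le
    (esymmMean_pos_of_mem_gardingCone hκ hkm (by omega)).le
    (esymmMean_pow_le_pow_of_mem_gardingCone hκ hkm hi)

theorem div_mul_choose_rpow_mul_rpow_eq {m i : ℕ} (hi : i + 1 ≤ m) {x : ℝ} (hx : 0 ≤ x) :
    (i + 1 : ℝ) / ((m : ℝ) - i) * (m.choose (i + 1) : ℝ) ^ ((1 : ℝ) / (i + 1)) *
        x ^ ((i : ℝ) / (i + 1)) =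
      m.choose i * (x / m.choose (i + 1)) ^ ((i : ℝ) / (i + 1)) := by
  have hC : (0 : ℝ) < m.choose (i + 1) := by exact_mod_cast Nat.choose_pos hi
  have hmi : (0 : ℝ) < m - i := by
    have : (i : ℝ) + 1 ≤ m := by exact_mod_cast hi
    linarith
  have hchoose : (m.choose (i + 1) : ℝ) * (i + 1) = m.choose i * ((m : ℝ) - i) := by
    rw [← Nat.cast_sub (by omega)]
    exact_mod_cast Nat.choose_succ_right_eq m i
  have hsplit : (m.choose (i + 1) : ℝ) ^ ((1 : ℝ) / (i + 1)) *
      (m.choose (i + 1) : ℝ) ^ ((i : ℝ) / (i + 1)) = m.choose (i + 1) := by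
    rw [← Real.rpow_add hC, ← add_div, add_comm (1 : ℝ), div_self (by positivity), Real.rpow_one]
  rw [Real.div_rpow hx hC.le]
  field_simp
  linear_combination (x ^ ((i : ℝ) / (i + 1))) * ((i + 1) * hsplit + hchoose)

theorem stmt_1_general (n k : ℕ) (hk2 : k ≤ n - 1)
    (κ : Fin (n - 1) → ℝ) (hκ : κ ∈ gardingCone (n - 1) k)
    (j : ℕ) (hj1 : 1 ≤ j) (hj2 : j ≤ k) :
    esymm (n - 1) (j - 1) κ ≥
      ((j : ℝ) / ((n : ℝ) - j)) * ((Nat.choose (n - 1) j : ℝ)) ^ ((1 : ℝ) / j) *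
        (esymm (n - 1) j κ) ^ (((j : ℝ) - 1) / j) := by
  obtain ⟨i, rfl⟩ : ∃ i, j = i + 1 := ⟨j - 1, by omega⟩
  have hn : (n : ℝ) - ((i + 1 : ℕ) : ℝ) = ((n - 1 : ℕ) : ℝ) - i := by
    rw [Nat.cast_sub (by omega)]; push_cast; ring
  rw [hn, Nat.add_sub_cancel, Nat.cast_add_one, add_sub_cancel_right,
    div_mul_choose_rpow_mul_rpow_eq (hj2.trans hk2) (hκ _ hj1 hj2).le, ← esymmMean]
  exact choose_mul_esymmMean_rpow_le_esymm hκ hk2 hj2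

/-- Maclaurin-type inequality on the Gårding cone. -/
theorem stmt_1 (n k : ℕ) (hn : 3 ≤ n) (hk1 : 1 ≤ k) (hk2 : k ≤ n - 1)
    (κ : Fin (n - 1) → ℝ) (hκ : κ ∈ gardingCone (n - 1) k)
    (j : ℕ) (hj1 : 1 ≤ j) (hj2 : j ≤ k) :
    esymm (n - 1) (j - 1) κ ≥
      ((j : ℝ) / ((n : ℝ) - j)) * ((Nat.choose (n - 1) j : ℝ)) ^ ((1 : ℝ) / j) *
        (esymm (n - 1) j κ) ^ (((j : ℝ) - 1) / j) :=
  stmt_1_general n k hk2 κ hκ j hj1 hj2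
end

section
/- Let n ≥ 3 and 1 ≤ p ≤ n-1 be integers, let Σ be a connected topological space, and let κ : Σ → ℝ^{n-1} be a continuous map. Suppose that σ_p(κ(x)) > 0 for every x ∈ Σ, and that there exists a point x₀ ∈ Σ at which all n-1 components of κ(x₀) are positive. Then σ_j(κ(x)) > 0 for every x ∈ Σ and every j with 1 ≤ j ≤ p-1; in particular κ(x) lies in the Gårding cone Γ_p^+ for every x ∈ Σ. -/
lemma esymm_pos_of_pos {m j : ℕ} (hj : j ≤ m) {κ : Fin m → ℝ} (h : ∀ i, 0 < κ i) :
    0 < esymm m j κ := by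
  apply Finset.sum_pos
  · exact fun s _ => Finset.prod_pos fun i _ => h i
  · exact Finset.powersetCard_nonempty.2 (by simpa using hj)

lemma multiset_prod_pos {s : Multiset ℝ} (h : ∀ x ∈ s, 0 < x) : 0 < s.prod := by
  induction s using Multiset.induction with
  | empty => simp
  | cons a s ih =>
    simp only [Multiset.prod_cons]
    exact mul_pos (h a (by simp)) (ih fun x hx => h x (by simp [hx]))

lemma multiset_sum_pos {s : Multiset ℝ} (h : ∀ x ∈ s, 0 < x) (hne : s ≠ 0) : 0 < s.sum := by
  induction s using Multiset.induction with
  | empty => simp at hne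
  | cons a s ih =>
    simp only [Multiset.sum_cons]
    have ha := h a (by simp)
    have hs : 0 ≤ s.sum := by
      rcases eq_or_ne s 0 with rfl | hs0
      · simp
      · exact (ih (fun x hx => h x (by simp [hx])) hs0).le
    linarith

lemma esymm_zero_eq (m : ℕ) (κ : Fin m → ℝ) : esymm m 0 κ = 1 := by
  simp [esymm]

open Polynomial in
lemma esymm_key (m p : ℕ) (hp1 : 1 ≤ p) (hpm : p ≤ m) (κ : Fin m → ℝ)
    (hnn : ∀ j, 1 ≤ j → j ≤ p → 0 ≤ esymm m j κ) (hpos : 0 < esymm m p κ) :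
    ∀ j, 1 ≤ j → j ≤ p → 0 < esymm m j κ := by
  have hdf : ∀ a k : ℕ, k ≤ a → (0:ℝ) < (a.descFactorial k : ℝ) := by
    intro a k h
    have h' : a.descFactorial k ≠ 0 := by
      rw [Ne, Nat.descFactorial_eq_zero_iff_lt]; omega
    exact_mod_cast Nat.pos_of_ne_zero h'
  set q : ℝ[X] := ∏ i : Fin m, (X + C (κ i)) with hq
  have hcard : (Finset.univ : Finset (Fin m)).card = m := by simp
  have hqcoeff : ∀ k, k ≤ m → q.coeff k = esymm m (m - k) κ := by
    intro k hk
    rw [hq, Finset.prod_X_add_C_coeff _ _ (by rw [hcard]; exact hk)]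
    rw [esymm, hcard]
  -- roots of q
  set M : Multiset ℝ := (Finset.univ.val.map fun i : Fin m => -(κ i)) with hM
  have hqM : q = (M.map fun a => X - C a).prod := by
    rw [hM, Multiset.map_map]
    simp only [Function.comp_def, map_neg, sub_neg_eq_add]
    rfl
  have hqroots : q.roots = M := by rw [hqM, roots_multiset_prod_X_sub_C]
  have hqroots_card : Multiset.card q.roots = m := by
    rw [hqroots, hM]; simp
  -- iterated derivative
  set r : ℝ[X] := derivative^[m - p] q with hr
  have hrcoeff : ∀ i, r.coeff i
      = ((i + (m - p)).descFactorial (m - p) : ℝ) * q.coeff (i + (m - p)) := by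
    intro i
    rw [hr, Polynomial.coeff_iterate_derivative, nsmul_eq_mul]
  have hq_monic : q.Monic := monic_prod_of_monic _ _ fun i _ => monic_X_add_C (κ i)
  have hq_deg : q.natDegree = m := by
    rw [hq, natDegree_prod_of_monic _ _ fun i _ => monic_X_add_C (κ i)]
    simp
  have hdeg_le : r.natDegree ≤ p := by
    refine (Polynomial.natDegree_iterate_derivative q (m - p)).trans ?_
    rw [hq_deg]; omega
  have hrp : r.coeff p = (m.descFactorial (m - p) : ℝ) := by
    rw [hrcoeff]
    have h1 : p + (m - p) = m := by omega
    rw [h1, hqcoeff m le_rfl, Nat.sub_self, esymm_zero_eq, mul_one]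
  have hrp_pos : 0 < r.coeff p := by
    rw [hrp]
    exact hdf _ _ (by omega)
  have hr_ne : r ≠ 0 := fun h => by simp [h] at hrp_pos
  have hdeg : r.natDegree = p :=
    le_antisymm hdeg_le (le_natDegree_of_ne_zero (ne_of_gt hrp_pos))
  have hlead : 0 < r.leadingCoeff := by
    rw [Polynomial.leadingCoeff, hdeg]; exact hrp_pos
  -- intermediate: coeff positivity at 0 and nonneg everywhere
  have hr0_pos : 0 < r.coeff 0 := by
    rw [hrcoeff, Nat.zero_add, hqcoeff _ (by omega)]
    have h2 : m - (m - p) = p := by omega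
    rw [h2]
    exact mul_pos (hdf _ _ le_rfl) hpos
  have hcoeff_nonneg : ∀ i, 0 ≤ r.coeff i := by
    intro i
    by_cases hip : i ≤ p
    · rw [hrcoeff, hqcoeff _ (by omega)]
      have h3 : m - (i + (m - p)) = p - i := by omega
      rw [h3]
      refine mul_nonneg (by positivity) ?_
      rcases Nat.eq_zero_or_pos (p - i) with h0 | h0
      · rw [h0, esymm_zero_eq]; norm_num
      · exact hnn _ h0 (by omega)
    · rw [Polynomial.coeff_eq_zero_of_natDegree_lt (by omega)]
  -- root count of r
  have hroots_ge : ∀ k, m ≤ Multiset.card (derivative^[k] q).roots + k := by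
    intro k
    induction k with
    | zero => simpa using hqroots_card.ge
    | succ k ih =>
      have h4 := Polynomial.card_roots_le_derivative (derivative^[k] q)
      rw [Function.iterate_succ_apply']
      omega
  have hroots_card : Multiset.card r.roots = p := by
    have h5 := hroots_ge (m - p)
    have h6 := Polynomial.card_roots' r
    rw [← hr] at h5
    omega
  -- roots are negative
  have hroots_neg : ∀ a ∈ r.roots, a < 0 := by
    intro a ha
    by_contra hna
    push_neg at hna
    have heval : r.eval a = 0 := (Polynomial.mem_roots hr_ne).1 ha
    have hpos' : 0 < r.eval a := by
      rw [Polynomial.eval_eq_sum_range]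
      refine Finset.sum_pos' (fun i _ => mul_nonneg (hcoeff_nonneg i) (by positivity)) ?_
      refine ⟨0, Finset.mem_range.2 (by omega), ?_⟩
      simpa using hr0_pos
    linarith
  -- factorization
  have hfac := Polynomial.C_leadingCoeff_mul_prod_multiset_X_sub_C
      (p := r) (hroots_card.trans hdeg.symm)
  -- conclude
  intro j hj1 hjp
  have hcoeffj : r.coeff (p - j)
      = ((p - j + (m - p)).descFactorial (m - p) : ℝ) * esymm m j κ := by
    rw [hrcoeff, hqcoeff _ (by omega)]
    congr 2
    omega
  have hcj : (0 : ℝ) < ((p - j + (m - p)).descFactorial (m - p) : ℝ) := hdf _ _ (by omega)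
  suffices hsuff : 0 < r.coeff (p - j) by nlinarith [hcoeffj, hcj]
  -- compute coeff via factorization
  rw [← hfac, Polynomial.coeff_C_mul]
  refine mul_pos hlead ?_
  have hmap : (r.roots.map fun a => X - C a)
      = ((r.roots.map fun a => -a).map fun a => X + C a) := by
    rw [Multiset.map_map]
    simp [Function.comp_def, sub_eq_add_neg]
  rw [hmap]
  have hcardroots : Multiset.card (r.roots.map fun a => -a) = p := by
    rw [Multiset.card_map, hroots_card]
  rw [Multiset.prod_X_add_C_coeff _ (by rw [hcardroots]; omega)]
  rw [hcardroots]
  have h7 : p - (p - j) = j := by omega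
  rw [h7]
  unfold Multiset.esymm
  apply multiset_sum_pos
  · intro x hx
    obtain ⟨t, ht, rfl⟩ := Multiset.mem_map.1 hx
    obtain ⟨hts, -⟩ := Multiset.mem_powersetCard.1 ht
    apply multiset_prod_pos
    intro y hy
    have hy' := Multiset.mem_of_le hts hy
    obtain ⟨b, hb, rfl⟩ := Multiset.mem_map.1 hy'
    exact neg_pos.2 (hroots_neg b hb)
  · intro h0
    rw [Multiset.map_eq_zero] at h0
    have hc := Multiset.card_powersetCard j (r.roots.map fun a => -a)
    rw [h0, hcardroots] at hc
    simp only [Multiset.card_zero] at hc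
    exact absurd hc.symm (Nat.choose_pos (show j ≤ p by omega)).ne'

/-- Abstract topological form of Lemma 4: on a connected space, if `σ_p ∘ κ > 0`
everywhere and there is an elliptic point, then `σ_j ∘ κ > 0` everywhere for
`1 ≤ j ≤ p - 1`; in particular `κ(x) ∈ Γ_p^+` for all `x`. -/
theorem stmt_4 (n p : ℕ) (hn : 3 ≤ n) (hp1 : 1 ≤ p) (hp2 : p ≤ n - 1)
    (X : Type*) [TopologicalSpace X] [ConnectedSpace X]
    (κ : X → Fin (n - 1) → ℝ) (hκ : Continuous κ)
    (hσp : ∀ x, 0 < esymm (n - 1) p (κ x))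
    (x₀ : X) (hx₀ : ∀ i, 0 < κ x₀ i) :
    (∀ x, ∀ j, 1 ≤ j → j ≤ p - 1 → 0 < esymm (n - 1) j (κ x)) ∧
    (∀ x, κ x ∈ gardingCone (n - 1) p) := by
  have hcont : ∀ j : ℕ, Continuous fun x => esymm (n - 1) j (κ x) := by
    intro j
    unfold esymm
    exact continuous_finset_sum _ fun s _ =>
      continuous_finset_prod _ fun i _ => (continuous_apply i).comp hκ
  set A : Set X := {x | ∀ j, 1 ≤ j → j ≤ p → 0 < esymm (n - 1) j (κ x)} with hA
  have hAeq : A = ⋂ j ∈ Finset.Icc 1 p, {x | 0 < esymm (n - 1) j (κ x)} := by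
    ext x
    simp only [hA, Set.mem_setOf_eq, Set.mem_iInter, Finset.mem_Icc]
    exact ⟨fun h j hj => h j hj.1 hj.2, fun h j h1 h2 => h j ⟨h1, h2⟩⟩
  have hopen : IsOpen A := by
    rw [hAeq]
    exact isOpen_biInter_finset fun j _ => isOpen_lt continuous_const (hcont j)
  have hclosed : IsClosed A := by
    rw [← closure_subset_iff_isClosed]
    intro x hx
    have hnn : ∀ j, 1 ≤ j → j ≤ p → 0 ≤ esymm (n - 1) j (κ x) := by
      intro j h1 h2
      have hcl : closure A ⊆ {x | 0 ≤ esymm (n - 1) j (κ x)} := by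
        apply closure_minimal
        · intro y hy
          exact le_of_lt (hy j h1 h2)
        · exact isClosed_le continuous_const (hcont j)
      exact hcl hx
    exact esymm_key (n - 1) p hp1 hp2 (κ x) hnn (hσp x)
  have hx₀A : x₀ ∈ A := fun j _ h2 => esymm_pos_of_pos (le_trans h2 hp2) hx₀
  have hclopen : IsClopen A := ⟨hclosed, hopen⟩
  have hAuniv : A = Set.univ := hclopen.eq_univ ⟨x₀, hx₀A⟩
  have hall : ∀ x, x ∈ A := fun x => hAuniv ▸ Set.mem_univ x
  constructor
  · intro x j h1 h2
    exact hall x j h1 (by omega)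
  · intro x j h1 h2
    exact hall x j h1 h2
end

section
/- Let m ≥ 1 and 1 ≤ k ≤ m be integers. The Gårding cone Γ_k^+ = {κ ∈ ℝ^m : σ_j(κ) > 0 for j = 1,…,k} equals the connected component of the open set {κ ∈ ℝ^m : σ_k(κ) > 0} that contains the point (1,1,…,1) (equivalently, the component containing the open positive cone {κ : κ_i > 0 for all i}). -/
/-!
For fixed `κ`, the polynomial `t ↦ σ_j(κ + t·(1, …, 1))` is the `(m - j)`-th Hasse derivative of
`∏ i, (t + κ_i)`, so by Rolle's theorem it has only real roots, and its coefficients are positive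
multiples of `σ_j(κ), σ_{j-1}(κ), …, σ_0(κ)`. If `σ_1, …, σ_k ≥ 0` and `σ_k > 0` at `κ`, then for
`j = k` this polynomial is positive on `[0, ∞)`, so all of its roots are negative and therefore all
of its coefficients are positive: `σ_j(κ) > 0` for every `j ≤ k`. Hence `Γ_k^+` is relatively
closed in `{σ_k > 0}`; it is also open and star-shaped about `(1, …, 1)`, so it is the connected
component of that point.
-/

open Polynomial Set

theorem Multiset.esymm_pos {R : Type*} [CommSemiring R] [PartialOrder R] [IsStrictOrderedRing R]
    {s : Multiset R} (hs : ∀ a ∈ s, 0 < a) {k : ℕ} (hk : k ≤ Multiset.card s) :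
    0 < s.esymm k := by
  have hterm : ∀ x ∈ (s.powersetCard k).map Multiset.prod, 0 < x := by
    intro x hx
    obtain ⟨t, ht, rfl⟩ := Multiset.mem_map.1 hx
    exact Multiset.prod_pos fun a ha =>
      hs a (Multiset.mem_of_le (Multiset.mem_powersetCard.1 ht).1 ha)
  obtain ⟨t, ht⟩ : ∃ t, t ∈ s.powersetCard k := Multiset.card_pos_iff_exists_mem.1 <| by
    simpa [Multiset.card_powersetCard] using Nat.choose_pos hk
  have htmem := Multiset.mem_map_of_mem Multiset.prod ht
  exact (hterm _ htmem).trans_le (Multiset.single_le_sum (fun x hx => (hterm x hx).le) _ htmem)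

namespace Polynomial

theorem eval_pos_of_coeff_nonneg {R : Type*} [CommSemiring R] [PartialOrder R]
    [IsStrictOrderedRing R] {p : R[X]} (hp : ∀ n, 0 ≤ p.coeff n) (h0 : 0 < p.coeff 0) {t : R}
    (ht : 0 ≤ t) : 0 < p.eval t := by
  rw [eval_eq_sum_range]
  refine Finset.sum_pos' (fun n _ => mul_nonneg (hp n) (pow_nonneg ht n)) ⟨0, by simp, by simpa⟩

theorem Splits.coeff_pos_of_roots_neg {R : Type*} [CommRing R] [LinearOrder R]
    [IsStrictOrderedRing R] {p : R[X]} (hp : p.Splits) (hlc : 0 < p.leadingCoeff)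
    (hroots : ∀ r ∈ p.roots, r < 0) {n : ℕ} (hn : n ≤ p.natDegree) : 0 < p.coeff n := by
  have hprod : (p.roots.map fun r => X - C r) = (p.roots.map Neg.neg).map fun a => X + C a := by
    simp [Multiset.map_map, sub_eq_add_neg]
  rw [hp.eq_prod_roots, coeff_C_mul, hprod, Multiset.prod_X_add_C_coeff]
  · refine mul_pos hlc (Multiset.esymm_pos ?_ ?_)
    · intro a ha
      obtain ⟨r, hr, rfl⟩ := Multiset.mem_map.1 ha
      exact neg_pos.2 (hroots r hr)
    · simp
  · simpa [splits_iff_card_roots.1 hp] using hn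

theorem Splits.derivative {p : ℝ[X]} (hp : p.Splits) : (Polynomial.derivative p).Splits := by
  rw [splits_iff_card_roots] at hp ⊢
  have := p.card_roots_le_derivative
  have := natDegree_derivative_le p
  have := (Polynomial.derivative p).card_roots'
  omega

theorem Splits.iterate_derivative {p : ℝ[X]} (hp : p.Splits) (n : ℕ) :
    (Polynomial.derivative^[n] p).Splits := by
  induction n with
  | zero => exact hp
  | succ n ih => rw [Function.iterate_succ_apply']; exact ih.derivative

theorem Splits.hasseDeriv {p : ℝ[X]} (hp : p.Splits) (n : ℕ) :
    (Polynomial.hasseDeriv n p).Splits := by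
  have h : Polynomial.hasseDeriv n p = C ((n.factorial : ℝ)⁻¹) * Polynomial.derivative^[n] p := by
    rw [← factorial_smul_hasseDeriv, LinearMap.smul_apply, nsmul_eq_mul, ← mul_assoc,
      ← C_eq_natCast, ← C_mul, inv_mul_cancel₀ (by positivity), C_1, one_mul]
  rw [h]
  exact (hp.iterate_derivative n).C_mul _

end Polynomial

section esymm

variable {m : ℕ}

theorem esymm_zero (κ : Fin m → ℝ) : esymm m 0 κ = 1 := by
  simp [esymm]

theorem esymm_smul (j : ℕ) (c : ℝ) (κ : Fin m → ℝ) : esymm m j (c • κ) = c ^ j * esymm m j κ := by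
  rw [esymm, esymm, Finset.mul_sum]
  refine Finset.sum_congr rfl fun s hs => ?_
  simp [Finset.prod_mul_distrib, (Finset.mem_powersetCard.1 hs).2]

theorem continuous_esymm (j : ℕ) : Continuous (esymm m j) := by
  unfold esymm
  fun_prop

theorem esymm_one {j : ℕ} : esymm m j 1 = m.choose j := by
  simp [esymm, Finset.card_powersetCard]

noncomputable def prodXAddC (κ : Fin m → ℝ) : ℝ[X] := ∏ i, (X + C (κ i))

theorem coeff_prodXAddC (κ : Fin m → ℝ) {n : ℕ} (hn : n ≤ m) :
    (prodXAddC κ).coeff n = esymm m (m - n) κ := by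
  rw [prodXAddC, Finset.prod_X_add_C_coeff _ _ (by simpa using hn)]
  simp [esymm]

theorem natDegree_prodXAddC (κ : Fin m → ℝ) : (prodXAddC κ).natDegree = m := by
  rw [prodXAddC, natDegree_prod_of_monic _ _ fun i _ => monic_X_add_C (κ i)]
  simp

theorem splits_prodXAddC (κ : Fin m → ℝ) : (prodXAddC κ).Splits :=
  Splits.prod fun i _ => Splits.X_add_C (κ i)

noncomputable def esymmShiftPoly (m j : ℕ) (κ : Fin m → ℝ) : ℝ[X] :=
  hasseDeriv (m - j) (prodXAddC κ)

variable (κ : Fin m → ℝ) {j : ℕ}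

theorem coeff_esymmShiftPoly (hj : j ≤ m) {n : ℕ} (hn : n ≤ j) :
    (esymmShiftPoly m j κ).coeff n = (n + (m - j)).choose (m - j) * esymm m (j - n) κ := by
  rw [esymmShiftPoly, hasseDeriv_coeff, coeff_prodXAddC κ (by omega)]
  congr 2
  omega

theorem natDegree_esymmShiftPoly (hj : j ≤ m) : (esymmShiftPoly m j κ).natDegree = j := by
  rw [esymmShiftPoly, natDegree_hasseDeriv, natDegree_prodXAddC]
  omega

theorem leadingCoeff_esymmShiftPoly_pos (hj : j ≤ m) :
    0 < (esymmShiftPoly m j κ).leadingCoeff := by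
  rw [leadingCoeff, natDegree_esymmShiftPoly κ hj, coeff_esymmShiftPoly κ hj le_rfl, Nat.sub_self,
    esymm_zero, mul_one]
  exact_mod_cast Nat.choose_pos (Nat.le_add_left _ _)

theorem eval_esymmShiftPoly (hj : j ≤ m) (t : ℝ) :
    (esymmShiftPoly m j κ).eval t = esymm m j (fun i => κ i + t) := by
  have h : taylor t (prodXAddC κ) = prodXAddC fun i => κ i + t := by
    simp only [taylor_apply, prodXAddC, prod_comp, add_comp, X_comp, C_comp, C_add]
    ring_nf
  rw [esymmShiftPoly, ← taylor_coeff, h, coeff_prodXAddC _ (Nat.sub_le m j),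
    Nat.sub_sub_self hj]

theorem esymm_add_const_pos (hj : j ≤ m) (hnn : ∀ i, 1 ≤ i → i ≤ j → 0 ≤ esymm m i κ)
    (hpos : 0 < esymm m j κ) {t : ℝ} (ht : 0 ≤ t) : 0 < esymm m j (fun i => κ i + t) := by
  rw [← eval_esymmShiftPoly κ hj]
  refine eval_pos_of_coeff_nonneg (fun n => ?_) ?_ ht
  · rcases le_or_gt n j with hn | hn
    · rw [coeff_esymmShiftPoly κ hj hn]
      refine mul_nonneg (Nat.cast_nonneg _) ?_
      rcases Nat.eq_zero_or_pos (j - n) with h | h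
      · rw [h, esymm_zero]
        exact zero_le_one
      · exact hnn _ h (Nat.sub_le j n)
    · rw [coeff_eq_zero_of_natDegree_lt (by rwa [natDegree_esymmShiftPoly κ hj])]
  · rw [coeff_esymmShiftPoly κ hj (Nat.zero_le j), Nat.sub_zero]
    exact mul_pos (mod_cast Nat.choose_pos (by omega)) hpos

end esymm

section gardingCone

variable {m k : ℕ}

theorem mem_gardingCone_of_esymm_nonneg (hk : k ≤ m) {κ : Fin m → ℝ}
    (hnn : ∀ j, 1 ≤ j → j ≤ k → 0 ≤ esymm m j κ) (hpos : 0 < esymm m k κ) :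
    κ ∈ gardingCone m k := by
  have hroots : ∀ r ∈ (esymmShiftPoly m k κ).roots, r < 0 := by
    intro r hr
    by_contra! h
    have hr0 := (mem_roots'.1 hr).2
    rw [IsRoot, eval_esymmShiftPoly κ hk] at hr0
    exact (esymm_add_const_pos κ hk hnn hpos h).ne' hr0
  intro j hj1 hjk
  have hcoeff := ((splits_prodXAddC κ).hasseDeriv (m - k)).coeff_pos_of_roots_neg
    (leadingCoeff_esymmShiftPoly_pos κ hk) hroots (n := k - j)
    (by rw [← esymmShiftPoly, natDegree_esymmShiftPoly κ hk]; omega)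
  rw [← esymmShiftPoly, coeff_esymmShiftPoly κ hk (Nat.sub_le k j), Nat.sub_sub_self hjk] at hcoeff
  exact pos_of_mul_pos_right hcoeff (Nat.cast_nonneg _)

theorem isOpen_gardingCone : IsOpen (gardingCone m k) := by
  have h : gardingCone m k = ⋂ j ∈ Finset.Icc 1 k, {κ | 0 < esymm m j κ} := by
    ext κ
    simp [gardingCone, and_imp]
  rw [h]
  exact isOpen_biInter_finset fun j _ => isOpen_lt continuous_const (continuous_esymm j)

theorem closure_gardingCone_inter_subset (hk : k ≤ m) :
    closure (gardingCone m k) ∩ {κ | 0 < esymm m k κ} ⊆ gardingCone m k := by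
  rintro κ ⟨hκ, hpos⟩
  refine mem_gardingCone_of_esymm_nonneg hk (fun j hj1 hjk => ?_) hpos
  exact closure_minimal (fun x hx => (hx j hj1 hjk).le)
    (isClosed_le continuous_const (continuous_esymm j)) hκ

theorem one_mem_gardingCone (hk : k ≤ m) : (1 : Fin m → ℝ) ∈ gardingCone m k := fun j _ hjk => by
  rw [esymm_one]
  exact_mod_cast Nat.choose_pos (hjk.trans hk)

theorem starConvex_gardingCone (hk : k ≤ m) : StarConvex ℝ 1 (gardingCone m k) := by
  intro κ hκ a b ha hb hab
  rcases hb.eq_or_lt with rfl | hb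
  · simpa [show a = 1 by linarith] using one_mem_gardingCone hk
  have h : a • (1 : Fin m → ℝ) + b • κ = b • fun i => κ i + a / b := by
    ext i
    simp only [Pi.add_apply, Pi.smul_apply, Pi.one_apply, smul_eq_mul]
    field_simp
    ring
  intro j hj1 hjk
  rw [h, esymm_smul]
  exact mul_pos (pow_pos hb j) (esymm_add_const_pos κ (hjk.trans hk)
    (fun i hi1 hij => (hκ i hi1 (hij.trans hjk)).le) (hκ j hj1 hjk) (div_nonneg ha hb.le))

theorem gardingCone_subset_esymm_pos : gardingCone m k ⊆ {κ | 0 < esymm m k κ} := by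
  rcases Nat.eq_zero_or_pos k with rfl | hk
  · simp [esymm_zero]
  · exact fun κ hκ => hκ k hk le_rfl

end gardingCone

theorem stmt_7_general (m k : ℕ) (hk2 : k ≤ m) :
    gardingCone m k =
      connectedComponentIn {κ : Fin m → ℝ | 0 < esymm m k κ} (fun _ => 1) := by
  have hone := one_mem_gardingCone hk2
  refine Subset.antisymm ?_ ?_
  · exact ((starConvex_gardingCone hk2).isPathConnected hone).isConnected.isPreconnected
      |>.subset_connectedComponentIn hone (gardingCone_subset_esymm_pos)
  · refine isPreconnected_connectedComponentIn.subset_of_closure_inter_subset isOpen_gardingCone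
      ⟨1, mem_connectedComponentIn (gardingCone_subset_esymm_pos hone), hone⟩ ?_
    exact fun κ ⟨hcl, hκ⟩ =>
      closure_gardingCone_inter_subset hk2 ⟨hcl, connectedComponentIn_subset _ _ hκ⟩

/-- The Gårding cone equals the connected component of `{σ_k > 0}` containing
the point `(1, 1, …, 1)`. -/
theorem stmt_7 (m k : ℕ) (hm : 1 ≤ m) (hk1 : 1 ≤ k) (hk2 : k ≤ m) :
    gardingCone m k =
      connectedComponentIn {κ : Fin m → ℝ | 0 < esymm m k κ} (fun _ => 1) :=
  stmt_7_general m k hk2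
end
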